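/- arXiv:1810.00851 — 2 statements merged into one kernel-verified Lean document; each statement's English description precedes it below -/
import Mathlib

section
/- Let U ⊆ ℝ^m be an open set, z ∈ ℝ, j ∈ {1,…,m}, let h : U → ℝ be a bounded measurable function, and let φ : U → ℝ be differentiable with its j-th partial derivative ∂_jφ Lebesgue-integrable on U. Then ∫_U (φ(x) − z) h(x) · ε^{-1} g'((φ(x) − z)/ε) ∂_jφ(x) dx → 0 as ε → 0⁺; note that by the chain rule the integrand equals (φ − z) h ∂_j(χ_ε⁺(φ − z)). -/
open MeasureTheory Filter

/-- Boundary-layer integrals vanish: for U ⊆ ℝ^m open, h bounded measurable,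
φ differentiable on U with integrable j-th partial derivative,
∫_U (φ - z) h · ε⁻¹ g'((φ - z)/ε) ∂_jφ dx → 0 as ε → 0⁺. -/
theorem stmt2 (m : ℕ) (U : Set (EuclideanSpace ℝ (Fin m))) (hU : IsOpen U)
    (g : ℝ → ℝ) (hg_smooth : ContDiff ℝ (⊤ : ℕ∞) g) (hg_mono : Monotone g)
    (hg0 : ∀ x ≤ (0:ℝ), g x = 0) (hg1 : ∀ x ≥ (1:ℝ), g x = 1)
    (z : ℝ) (j : Fin m)
    (h : EuclideanSpace ℝ (Fin m) → ℝ) (hh_meas : Measurable h)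
    (C : ℝ) (hh_bd : ∀ x, |h x| ≤ C)
    (φ : EuclideanSpace ℝ (Fin m) → ℝ) (hφ : ∀ x ∈ U, DifferentiableAt ℝ φ x)
    (hint : IntegrableOn (fun x => fderiv ℝ φ x (EuclideanSpace.single j 1)) U volume) :
    Tendsto (fun ε : ℝ =>
        ∫ x in U, (φ x - z) * h x *
          (ε⁻¹ * deriv g ((φ x - z) / ε) * fderiv ℝ φ x (EuclideanSpace.single j 1)))
      (nhdsWithin 0 (Set.Ioi 0)) (nhds 0) := by
  have hC : 0 ≤ C := le_trans (abs_nonneg _) (hh_bd 0)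
  -- deriv g vanishes off [0,1]
  have hd_lt : ∀ t : ℝ, t < 0 → deriv g t = 0 := by
    intro t ht
    have : g =ᶠ[nhds t] fun _ => 0 := by
      filter_upwards [Iio_mem_nhds ht] with s hs using hg0 s (le_of_lt hs)
    rw [this.deriv_eq, deriv_const]
  have hd_gt : ∀ t : ℝ, 1 < t → deriv g t = 0 := by
    intro t ht
    have : g =ᶠ[nhds t] fun _ => 1 := by
      filter_upwards [Ioi_mem_nhds ht] with s hs using hg1 s (le_of_lt hs)
    rw [this.deriv_eq, deriv_const]
  have hgc : Continuous (deriv g) := hg_smooth.continuous_deriv (by simp)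
  -- bound for t * deriv g t
  obtain ⟨M, hM⟩ := (isCompact_Icc (a := (0:ℝ)) (b := 1)).exists_bound_of_continuousOn
    ((continuous_id.mul hgc).continuousOn)
  set M' : ℝ := max M 0 with hM'
  have hMb : ∀ t : ℝ, |t * deriv g t| ≤ M' := by
    intro t
    rcases lt_or_ge t 0 with h1 | h1
    · rw [hd_lt t h1]; rw [mul_zero, abs_zero]; exact le_max_right M 0
    rcases le_or_gt t 1 with h2 | h2
    · exact le_trans (hM t ⟨h1, h2⟩) (le_max_left _ _)
    · rw [hd_gt t h2]; rw [mul_zero, abs_zero]; exact le_max_right M 0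
  set D : EuclideanSpace ℝ (Fin m) → ℝ := fun x => fderiv ℝ φ x (EuclideanSpace.single j 1) with hD
  have hφc : ContinuousOn φ U := fun x hx => (hφ x hx).continuousAt.continuousWithinAt
  have hφm : AEMeasurable φ (volume.restrict U) := hφc.aemeasurable hU.measurableSet
  have hDm : Measurable D := (measurable_fderiv_apply_const ℝ φ _)
  have key := MeasureTheory.tendsto_integral_filter_of_dominated_convergence
    (μ := volume.restrict U) (l := nhdsWithin (0:ℝ) (Set.Ioi 0))
    (F := fun ε x => (φ x - z) * h x * (ε⁻¹ * deriv g ((φ x - z) / ε) * D x))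
    (f := fun _ => (0:ℝ))
    (bound := fun x => M' * C * |D x|)
    ?_ ?_ ?_ ?_
  · simpa using key
  · filter_upwards [self_mem_nhdsWithin] with ε hε
    apply AEMeasurable.aestronglyMeasurable
    exact (((hφm.sub aemeasurable_const).mul hh_meas.aemeasurable).mul
      (((aemeasurable_const.mul ((hgc.measurable.comp_aemeasurable
        ((hφm.sub aemeasurable_const).mul aemeasurable_const)))).mul hDm.aemeasurable)))
  · filter_upwards [self_mem_nhdsWithin] with ε hε
    refine Filter.Eventually.of_forall fun x => ?_
    have hεne : (ε : ℝ) ≠ 0 := ne_of_gt hε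
    have heq : (φ x - z) * h x * (ε⁻¹ * deriv g ((φ x - z) / ε) * D x)
        = ((φ x - z) / ε * deriv g ((φ x - z) / ε)) * (h x * D x) := by
      field_simp
    rw [Real.norm_eq_abs, heq, abs_mul, abs_mul (h x)]
    have h1 := hMb ((φ x - z) / ε)
    have h0M : 0 ≤ M' := le_max_right _ _
    calc |(φ x - z) / ε * deriv g ((φ x - z) / ε)| * (|h x| * |D x|)
        ≤ M' * (C * |D x|) :=
          mul_le_mul h1 (mul_le_mul_of_nonneg_right (hh_bd x) (abs_nonneg _))
            (by positivity) h0M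
      _ = M' * C * |D x| := by ring
  · simpa [Real.norm_eq_abs] using hint.norm.const_mul (M' * C)
  · refine Filter.Eventually.of_forall fun x => ?_
    rcases lt_trichotomy (φ x - z) 0 with hlt | heq0 | hgt
    · apply Tendsto.congr' _ tendsto_const_nhds
      filter_upwards [self_mem_nhdsWithin] with ε hε
      rw [hd_lt _ (div_neg_of_neg_of_pos hlt hε)]; ring
    · apply Tendsto.congr' _ tendsto_const_nhds
      refine Filter.Eventually.of_forall fun ε => ?_
      simp [heq0]
    · apply Tendsto.congr' _ tendsto_const_nhds
      have hmem : Set.Ioo (0:ℝ) (φ x - z) ∈ nhdsWithin (0:ℝ) (Set.Ioi 0) :=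
        Ioo_mem_nhdsGT_of_mem (by simp [le_refl, hgt])
      filter_upwards [hmem] with ε hε
      rw [hd_gt _ ((one_lt_div hε.1).2 hε.2)]; ring
end

section
/- Let φ : [0,1] → ℝ be continuous and let V₀, V₁ ∈ ℝ. Define V(x) := ∫₀¹ G(x,y) φ(y) dy + ((x − A₀)/D)(V₁ − V₀) + V₀ for x ∈ [0,1]. Then V is twice differentiable on [0,1] (one-sided at the endpoints) with V''(x) = φ(x) for every x ∈ [0,1], and V satisfies the Robin boundary conditions V(0) + A₀ V'(0) = V₀ and V(1) + A₁ V'(1) = V₁. -/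
/-!
Split the Green integral at `y = x`: on `[0,1]`, `V` agrees with
`((1 + A₁ - x) P x + (A₀ - x) Q x) / D` plus the affine part, where `P x = ∫₀ˣ (A₀ - y) φ y` and
`Q x = ∫ₓ¹ (1 + A₁ - y) φ y`. Since `G` is continuous across the diagonal, the two boundary terms
produced by differentiating `P` and `Q` cancel, so `V' = (V₁ - V₀ - P - Q) / D`; differentiating
once more, the jump `(1 + A₁ - x) - (A₀ - x) = D` of `∂G/∂x` gives `V'' = φ`. The Robin conditions
are then read off at `x = 0`, where `P` vanishes, and at `x = 1`, where `Q` does.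
-/

open Set intervalIntegral MeasureTheory
open scoped Interval

theorem ContinuousOn.exists_continuous_eqOn_Icc {X : Type*} [TopologicalSpace X] {a b : ℝ}
    (hab : a ≤ b) {f : ℝ → X} (hf : ContinuousOn f (Icc a b)) :
    ∃ g : ℝ → X, Continuous g ∧ EqOn g f (Icc a b) :=
  ⟨fun x => f (projIcc a b hab x),
    hf.comp_continuous (continuous_subtype_val.comp continuous_projIcc) fun x => (projIcc a b hab x).2,
    fun x hx => by simp only [projIcc_of_mem hab hx]⟩

theorem intervalIntegral.integral_ite_le_eq_add {E : Type*} [NormedAddCommGroup E]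
    [NormedSpace ℝ E] {μ : Measure ℝ} {f g : ℝ → E} {a b x : ℝ} (hax : a ≤ x) (hxb : x ≤ b)
    (hf : IntervalIntegrable f μ a x) (hg : IntervalIntegrable g μ x b) :
    ∫ y in a..b, (if y ≤ x then f y else g y) ∂μ = (∫ y in a..x, f y ∂μ) + ∫ y in x..b, g y ∂μ := by
  have hleft : EqOn (fun y => if y ≤ x then f y else g y) f (Ι a x) := fun y hy => by
    rw [uIoc_of_le hax] at hy
    exact if_pos hy.2
  have hright : EqOn (fun y => if y ≤ x then f y else g y) g (Ι x b) := fun y hy => by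
    rw [uIoc_of_le hxb] at hy
    exact if_neg (not_le.2 hy.1)
  rw [← integral_add_adjacent_intervals ((intervalIntegrable_congr hleft).2 hf)
      ((intervalIntegrable_congr hright).2 hg),
    integral_congr_ae (.of_forall hleft), integral_congr_ae (.of_forall hright)]

theorem Continuous.integral_hasDerivAt_left {E : Type*} [NormedAddCommGroup E] [NormedSpace ℝ E]
    [CompleteSpace E] {f : ℝ → E} (hf : Continuous f) (a b : ℝ) :
    HasDerivAt (fun u => ∫ y in u..b, f y) (-f a) a := by
  simpa only [integral_symm b] using (hf.integral_hasStrictDerivAt b a).hasDerivAt.fun_neg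

noncomputable section

namespace Robin

variable (A₀ A₁ V₀ V₁ : ℝ) (φ : ℝ → ℝ)

def green (x y : ℝ) : ℝ :=
  if y ≤ x then (1 + A₁ - x) * (A₀ - y) / (1 + A₁ - A₀)
  else (1 + A₁ - y) * (A₀ - x) / (1 + A₁ - A₀)

def solution (x : ℝ) : ℝ :=
  ((1 + A₁ - x) * (∫ y in 0..x, (A₀ - y) * φ y) + (A₀ - x) * ∫ y in x..1, (1 + A₁ - y) * φ y) /
      (1 + A₁ - A₀) + (x - A₀) / (1 + A₁ - A₀) * (V₁ - V₀) + V₀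

def solutionDeriv (x : ℝ) : ℝ :=
  (V₁ - V₀ - (∫ y in 0..x, (A₀ - y) * φ y) - ∫ y in x..1, (1 + A₁ - y) * φ y) / (1 + A₁ - A₀)

variable {A₀ A₁ V₀ V₁ φ}

theorem integral_green_mul (hφ : Continuous φ) {x : ℝ} (hx : x ∈ Icc 0 1) :
    ∫ y in 0..1, green A₀ A₁ x y * φ y =
      ((1 + A₁ - x) * (∫ y in 0..x, (A₀ - y) * φ y) + (A₀ - x) * ∫ y in x..1, (1 + A₁ - y) * φ y) /
        (1 + A₁ - A₀) := by
  have hsplit : ∀ y, green A₀ A₁ x y * φ y = if y ≤ x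
      then (1 + A₁ - x) / (1 + A₁ - A₀) * ((A₀ - y) * φ y)
      else (A₀ - x) / (1 + A₁ - A₀) * ((1 + A₁ - y) * φ y) := fun y => by
    unfold green
    split_ifs <;> ring
  simp_rw [hsplit]
  rw [integral_ite_le_eq_add hx.1 hx.2 ((by fun_prop : Continuous _).intervalIntegrable _ _)
    ((by fun_prop : Continuous _).intervalIntegrable _ _), intervalIntegral.integral_const_mul,
    intervalIntegral.integral_const_mul]
  ring

theorem hasDerivAt_solution (hφ : Continuous φ) (x : ℝ) :
    HasDerivAt (solution A₀ A₁ V₀ V₁ φ) (solutionDeriv A₀ A₁ V₀ V₁ φ x) x := by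
  have hP := (show Continuous fun y => (A₀ - y) * φ y by fun_prop).integral_hasStrictDerivAt 0 x
  have hQ := (show Continuous fun y => (1 + A₁ - y) * φ y by fun_prop).integral_hasDerivAt_left x 1
  have hid := hasDerivAt_id x
  have := (((((hid.const_sub (1 + A₁)).mul hP.hasDerivAt).add ((hid.const_sub A₀).mul hQ)).div_const
    (1 + A₁ - A₀)).add (((hid.sub_const A₀).div_const (1 + A₁ - A₀)).mul_const (V₁ - V₀))).add_const V₀
  refine this.congr_deriv ?_
  simp only [solutionDeriv, id]
  ring

theorem hasDerivAt_solutionDeriv (hD : 1 + A₁ - A₀ ≠ 0) (hφ : Continuous φ) (x : ℝ) :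
    HasDerivAt (solutionDeriv A₀ A₁ V₀ V₁ φ) (φ x) x := by
  have hP := (show Continuous fun y => (A₀ - y) * φ y by fun_prop).integral_hasStrictDerivAt 0 x
  have hQ := (show Continuous fun y => (1 + A₁ - y) * φ y by fun_prop).integral_hasDerivAt_left x 1
  have := ((hP.hasDerivAt.const_sub (V₁ - V₀)).sub hQ).div_const (1 + A₁ - A₀)
  refine this.congr_deriv ?_
  field_simp
  ring

theorem solution_zero_add_mul_solutionDeriv_zero (hD : 1 + A₁ - A₀ ≠ 0) :
    solution A₀ A₁ V₀ V₁ φ 0 + A₀ * solutionDeriv A₀ A₁ V₀ V₁ φ 0 = V₀ := by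
  simp only [solution, solutionDeriv, integral_same]
  field_simp
  ring

theorem solution_one_add_mul_solutionDeriv_one (hD : 1 + A₁ - A₀ ≠ 0) :
    solution A₀ A₁ V₀ V₁ φ 1 + A₁ * solutionDeriv A₀ A₁ V₀ V₁ φ 1 = V₁ := by
  simp only [solution, solutionDeriv, integral_same]
  field_simp
  ring

end Robin

end

/-- The function V(x) = ∫₀¹ G(x,y) φ(y) dy + ((x - A₀)/D)(V₁ - V₀) + V₀ is twice
differentiable on [0,1] (one-sided at the endpoints), V'' = φ on [0,1], and V
satisfies the Robin boundary conditions V(0) + A₀V'(0) = V₀, V(1) + A₁V'(1) = V₁. -/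
theorem stmt10 (A₀ A₁ : ℝ) (hD : 1 + A₁ - A₀ ≠ 0)
    (φ : ℝ → ℝ) (hφ : ContinuousOn φ (Set.Icc 0 1)) (V₀ V₁ : ℝ) :
    let D := 1 + A₁ - A₀
    let G : ℝ → ℝ → ℝ := fun x y =>
      if y ≤ x then (1 + A₁ - x) * (A₀ - y) / D else (1 + A₁ - y) * (A₀ - x) / D
    let V : ℝ → ℝ := fun x =>
      (∫ y in (0:ℝ)..1, G x y * φ y) + (x - A₀) / D * (V₁ - V₀) + V₀
    ∃ V' V'' : ℝ → ℝ,
      (∀ x ∈ Set.Icc (0:ℝ) 1, HasDerivWithinAt V (V' x) (Set.Icc 0 1) x) ∧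
      (∀ x ∈ Set.Icc (0:ℝ) 1, HasDerivWithinAt V' (V'' x) (Set.Icc 0 1) x) ∧
      (∀ x ∈ Set.Icc (0:ℝ) 1, V'' x = φ x) ∧
      V 0 + A₀ * V' 0 = V₀ ∧ V 1 + A₁ * V' 1 = V₁ := by
  intro D G V
  obtain ⟨ψ, hψ, hψφ⟩ := hφ.exists_continuous_eqOn_Icc zero_le_one
  have hV : EqOn V (Robin.solution A₀ A₁ V₀ V₁ ψ) (Icc 0 1) := fun x hx => by
    have hφψ : (∫ y in (0:ℝ)..1, G x y * φ y) = ∫ y in (0:ℝ)..1, Robin.green A₀ A₁ x y * ψ y :=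
      integral_congr fun y hy => by
        rw [uIcc_of_le zero_le_one] at hy
        simp only [hψφ hy]
        rfl
    simp only [V, D, hφψ, Robin.integral_green_mul hψ hx, Robin.solution]
  refine ⟨Robin.solutionDeriv A₀ A₁ V₀ V₁ ψ, ψ,
    fun x hx => (Robin.hasDerivAt_solution hψ x).hasDerivWithinAt.congr hV (hV hx),
    fun x _ => (Robin.hasDerivAt_solutionDeriv hD hψ x).hasDerivWithinAt, fun x hx => hψφ hx, ?_, ?_⟩
  · rw [hV (left_mem_Icc.2 zero_le_one)]
    exact Robin.solution_zero_add_mul_solutionDeriv_zero hD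
  · rw [hV (right_mem_Icc.2 zero_le_one)]
    exact Robin.solution_one_add_mul_solutionDeriv_one hD
end
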